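/- arXiv:2007.08326 — 4 statements merged into one kernel-verified Lean document; each statement's English description precedes it below -/
import Mathlib

section
/- Assume the setting of the discrete Dirac structure M₁f₁ = -Dᵀe₂ + B e∂, M₂f₂ = D e₁, M∂ f∂ = -Bᵀ e₁ with symmetric mass matrices, and suppose f₁ = dα₁/dt, f₂ = dα₂/dt, and the discrete Hamiltonian Hᵈ(α₁,α₂) satisfies ∇_{α₁}Hᵈ = M₁ e₁ and ∇_{α₂}Hᵈ = M₂ e₂ (compatibility). Then d/dt Hᵈ = -e∂ᵀ M∂ f∂. -/
open Matrix

/-- The continuous linear map `v ↦ w ⬝ᵥ v` on `Fin n → ℝ`. -/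
noncomputable def dotCLM {n : ℕ} (w : Fin n → ℝ) : (Fin n → ℝ) →L[ℝ] ℝ :=
  LinearMap.toContinuousLinearMap
    { toFun := fun v => w ⬝ᵥ v
      map_add' := fun a b => dotProduct_add w a b
      map_smul' := fun c a => by simp [dotProduct_smul] }

/-!
Along a trajectory the chain rule gives `d/dt Hᵈ = (M₁e₁)·f₁ + (M₂e₂)·f₂`. Symmetry of the
mass matrices moves them onto the flows, and the Dirac relations turn this into
`-e₁·Dᵀe₂ + e₁·B e∂ + e₂·D e₁`: the interconnection `D` cancels by skew-symmetry and only the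
boundary term `e₁·B e∂ = -e∂·M∂ f∂` survives.
-/

section PowerBalance

variable {R ι₁ ι₂ ιb : Type*} [CommRing R] [Fintype ι₁] [Fintype ι₂] [Fintype ιb]

lemma Matrix.mulVec_dotProduct_of_transpose_eq {M : Matrix ι₁ ι₁ R} (hM : Mᵀ = M)
    (x y : ι₁ → R) : M *ᵥ x ⬝ᵥ y = x ⬝ᵥ M *ᵥ y := by
  rw [dotProduct_mulVec, ← vecMul_transpose, hM]

theorem dirac_power_balance {M₁ : Matrix ι₁ ι₁ R} {M₂ : Matrix ι₂ ι₂ R} {Mb : Matrix ιb ιb R}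
    (hM₁ : M₁ᵀ = M₁) (hM₂ : M₂ᵀ = M₂) {D : Matrix ι₂ ι₁ R} {B : Matrix ι₁ ιb R}
    {f₁ e₁ : ι₁ → R} {f₂ e₂ : ι₂ → R} {fb eb : ιb → R}
    (h₁ : M₁ *ᵥ f₁ = -(Dᵀ *ᵥ e₂) + B *ᵥ eb) (h₂ : M₂ *ᵥ f₂ = D *ᵥ e₁)
    (hb : Mb *ᵥ fb = -(Bᵀ *ᵥ e₁)) :
    M₁ *ᵥ e₁ ⬝ᵥ f₁ + M₂ *ᵥ e₂ ⬝ᵥ f₂ = -(eb ⬝ᵥ Mb *ᵥ fb) := by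
  rw [mulVec_dotProduct_of_transpose_eq hM₁, mulVec_dotProduct_of_transpose_eq hM₂, h₁, h₂, hb,
    dotProduct_add, dotProduct_neg, dotProduct_neg, dotProduct_transpose_mulVec,
    dotProduct_transpose_mulVec]
  ring

end PowerBalance

theorem stmt9_general {n₁ n₂ nb : ℕ}
    (M₁ : Matrix (Fin n₁) (Fin n₁) ℝ) (M₂ : Matrix (Fin n₂) (Fin n₂) ℝ)
    (Mb : Matrix (Fin nb) (Fin nb) ℝ)
    (hM₁ : M₁ᵀ = M₁) (hM₂ : M₂ᵀ = M₂)
    (D : Matrix (Fin n₂) (Fin n₁) ℝ) (B : Matrix (Fin n₁) (Fin nb) ℝ)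
    (α₁ f₁ e₁ : ℝ → (Fin n₁ → ℝ)) (α₂ f₂ e₂ : ℝ → (Fin n₂ → ℝ))
    (fb eb : ℝ → (Fin nb → ℝ))
    (hα₁ : ∀ t, HasDerivAt α₁ (f₁ t) t) (hα₂ : ∀ t, HasDerivAt α₂ (f₂ t) t)
    (h1 : ∀ t, M₁.mulVec (f₁ t) = -(Dᵀ.mulVec (e₂ t)) + B.mulVec (eb t))
    (h2 : ∀ t, M₂.mulVec (f₂ t) = D.mulVec (e₁ t))
    (h3 : ∀ t, Mb.mulVec (fb t) = -(Bᵀ.mulVec (e₁ t)))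
    (Hd : (Fin n₁ → ℝ) → (Fin n₂ → ℝ) → ℝ)
    (hgrad : ∀ t, HasFDerivAt (fun p : (Fin n₁ → ℝ) × (Fin n₂ → ℝ) => Hd p.1 p.2)
      ((dotCLM (M₁.mulVec (e₁ t))).comp (ContinuousLinearMap.fst ℝ (Fin n₁ → ℝ) (Fin n₂ → ℝ)) +
       (dotCLM (M₂.mulVec (e₂ t))).comp (ContinuousLinearMap.snd ℝ (Fin n₁ → ℝ) (Fin n₂ → ℝ)))
      (α₁ t, α₂ t))
    (t : ℝ) :
    HasDerivAt (fun s => Hd (α₁ s) (α₂ s)) (-(eb t ⬝ᵥ Mb.mulVec (fb t))) t := by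
  have chain := (hgrad t).comp_hasDerivAt t ((hα₁ t).prodMk (hα₂ t))
  exact chain.congr_deriv (dirac_power_balance hM₁ hM₂ (h1 t) (h2 t) (h3 t))

/-- Discrete power balance (hyperbolic case): with the discrete Dirac structure
and compatible constitutive relations `∇_{α₁}Hᵈ = M₁e₁`, `∇_{α₂}Hᵈ = M₂e₂`,
one has `d/dt Hᵈ = -e∂ᵀ M∂ f∂`. -/
theorem stmt9 {n₁ n₂ nb : ℕ}
    (M₁ : Matrix (Fin n₁) (Fin n₁) ℝ) (M₂ : Matrix (Fin n₂) (Fin n₂) ℝ)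
    (Mb : Matrix (Fin nb) (Fin nb) ℝ)
    (hM₁ : M₁ᵀ = M₁) (hM₂ : M₂ᵀ = M₂) (hMb : Mbᵀ = Mb)
    (D : Matrix (Fin n₂) (Fin n₁) ℝ) (B : Matrix (Fin n₁) (Fin nb) ℝ)
    (α₁ f₁ e₁ : ℝ → (Fin n₁ → ℝ)) (α₂ f₂ e₂ : ℝ → (Fin n₂ → ℝ))
    (fb eb : ℝ → (Fin nb → ℝ))
    (hα₁ : ∀ t, HasDerivAt α₁ (f₁ t) t) (hα₂ : ∀ t, HasDerivAt α₂ (f₂ t) t)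
    (h1 : ∀ t, M₁.mulVec (f₁ t) = -(Dᵀ.mulVec (e₂ t)) + B.mulVec (eb t))
    (h2 : ∀ t, M₂.mulVec (f₂ t) = D.mulVec (e₁ t))
    (h3 : ∀ t, Mb.mulVec (fb t) = -(Bᵀ.mulVec (e₁ t)))
    (Hd : (Fin n₁ → ℝ) → (Fin n₂ → ℝ) → ℝ)
    (hgrad : ∀ t, HasFDerivAt (fun p : (Fin n₁ → ℝ) × (Fin n₂ → ℝ) => Hd p.1 p.2)
      ((dotCLM (M₁.mulVec (e₁ t))).comp (ContinuousLinearMap.fst ℝ (Fin n₁ → ℝ) (Fin n₂ → ℝ)) +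
       (dotCLM (M₂.mulVec (e₂ t))).comp (ContinuousLinearMap.snd ℝ (Fin n₁ → ℝ) (Fin n₂ → ℝ)))
      (α₁ t, α₂ t))
    (t : ℝ) :
    HasDerivAt (fun s => Hd (α₁ s) (α₂ s)) (-(eb t ⬝ᵥ Mb.mulVec (fb t))) t :=
  stmt9_general M₁ M₂ Mb hM₁ hM₂ D B α₁ f₁ e₁ α₂ f₂ e₂ fb eb hα₁ hα₂ h1 h2 h3 Hd hgrad t
end

section
/- Assume the discrete Dirac structure M₁f₁ = -Dᵀe₂ + B e∂, M₂f₂ = D e₁, M∂ f∂ = -Bᵀ e₁ with symmetric mass matrices, where only f₁ = dα₁/dt is a time derivative, and the discrete Hamiltonian Hᵈ(α₁) satisfies ∇Hᵈ = M₁ e₁. Then d/dt Hᵈ = -e₂ᵀ M₂ f₂ - e∂ᵀ M∂ f∂. -/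
/-! The power balance is the skew-adjointness of the interconnection: the pairing of `e₁` with
`M₁ f₁ = -Dᵀ e₂ + B e∂` is moved across `Dᵀ` and `B` onto `D e₁ = M₂ f₂` and `Bᵀ e₁ = -M∂ f∂`,
and the chain rule with `∇Hᵈ = M₁ e₁` identifies that pairing with `d/dt Hᵈ`. -/

open Matrix

theorem dotCLM_apply {n : ℕ} (w v : Fin n → ℝ) : dotCLM w v = w ⬝ᵥ v := rfl

theorem HasFDerivAt.comp_hasDerivAt_dotCLM {n : ℕ} {H : (Fin n → ℝ) → ℝ} {α : ℝ → Fin n → ℝ}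
    {g f : Fin n → ℝ} {t : ℝ} (hH : HasFDerivAt H (dotCLM g) (α t)) (hα : HasDerivAt α f t) :
    HasDerivAt (fun s => H (α s)) (g ⬝ᵥ f) t := by
  have h := hH.comp_hasDerivAt t hα
  rw [dotCLM_apply] at h
  exact h

section PowerBalance

variable {R ι₁ ι₂ ιb : Type*} [CommRing R] [Fintype ι₁] [Fintype ι₂] [Fintype ιb]

theorem dotProduct_transpose_mulVec_eq_of_mulVec_eq {M₂ : Matrix ι₂ ι₂ R} {D : Matrix ι₂ ι₁ R}
    {e₁ : ι₁ → R} {e₂ f₂ : ι₂ → R} (h2 : M₂ *ᵥ f₂ = D *ᵥ e₁) :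
    e₁ ⬝ᵥ Dᵀ *ᵥ e₂ = e₂ ⬝ᵥ M₂ *ᵥ f₂ := by
  rw [dotProduct_mulVec, vecMul_transpose, ← h2, dotProduct_comm]

theorem dotProduct_mulVec_eq_neg_of_mulVec_eq_neg {Mb : Matrix ιb ιb R} {B : Matrix ι₁ ιb R}
    {e₁ : ι₁ → R} {eb fb : ιb → R} (h3 : Mb *ᵥ fb = -(Bᵀ *ᵥ e₁)) :
    e₁ ⬝ᵥ B *ᵥ eb = -(eb ⬝ᵥ Mb *ᵥ fb) := by
  rw [h3, dotProduct_neg, neg_neg, dotProduct_mulVec, ← mulVec_transpose, dotProduct_comm]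

theorem mulVec_dotProduct_eq_power_balance {M₁ : Matrix ι₁ ι₁ R} {M₂ : Matrix ι₂ ι₂ R}
    {Mb : Matrix ιb ιb R} (hM₁ : M₁ᵀ = M₁) {D : Matrix ι₂ ι₁ R} {B : Matrix ι₁ ιb R}
    {f₁ e₁ : ι₁ → R} {f₂ e₂ : ι₂ → R} {fb eb : ιb → R}
    (h1 : M₁ *ᵥ f₁ = -(Dᵀ *ᵥ e₂) + B *ᵥ eb) (h2 : M₂ *ᵥ f₂ = D *ᵥ e₁)
    (h3 : Mb *ᵥ fb = -(Bᵀ *ᵥ e₁)) :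
    M₁ *ᵥ e₁ ⬝ᵥ f₁ = -(e₂ ⬝ᵥ M₂ *ᵥ f₂) - eb ⬝ᵥ Mb *ᵥ fb := by
  calc M₁ *ᵥ e₁ ⬝ᵥ f₁ = e₁ ⬝ᵥ M₁ *ᵥ f₁ := by
        rw [← vecMul_transpose, hM₁, dotProduct_mulVec]
    _ = -(e₁ ⬝ᵥ Dᵀ *ᵥ e₂) + e₁ ⬝ᵥ B *ᵥ eb := by rw [h1, dotProduct_add, dotProduct_neg]
    _ = -(e₂ ⬝ᵥ M₂ *ᵥ f₂) - eb ⬝ᵥ Mb *ᵥ fb := by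
        rw [dotProduct_transpose_mulVec_eq_of_mulVec_eq h2,
          dotProduct_mulVec_eq_neg_of_mulVec_eq_neg h3, sub_eq_add_neg]

end PowerBalance

theorem stmt10_general {n₁ n₂ nb : ℕ}
    (M₁ : Matrix (Fin n₁) (Fin n₁) ℝ) (M₂ : Matrix (Fin n₂) (Fin n₂) ℝ)
    (Mb : Matrix (Fin nb) (Fin nb) ℝ)
    (hM₁ : M₁ᵀ = M₁)
    (D : Matrix (Fin n₂) (Fin n₁) ℝ) (B : Matrix (Fin n₁) (Fin nb) ℝ)
    (α₁ f₁ e₁ : ℝ → (Fin n₁ → ℝ)) (f₂ e₂ : ℝ → (Fin n₂ → ℝ))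
    (fb eb : ℝ → (Fin nb → ℝ))
    (hα₁ : ∀ t, HasDerivAt α₁ (f₁ t) t)
    (h1 : ∀ t, M₁.mulVec (f₁ t) = -(Dᵀ.mulVec (e₂ t)) + B.mulVec (eb t))
    (h2 : ∀ t, M₂.mulVec (f₂ t) = D.mulVec (e₁ t))
    (h3 : ∀ t, Mb.mulVec (fb t) = -(Bᵀ.mulVec (e₁ t)))
    (Hd : (Fin n₁ → ℝ) → ℝ)
    (hgrad : ∀ t, HasFDerivAt Hd (dotCLM (M₁.mulVec (e₁ t))) (α₁ t))
    (t : ℝ) :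
    HasDerivAt (fun s => Hd (α₁ s))
      (-(e₂ t ⬝ᵥ M₂.mulVec (f₂ t)) - eb t ⬝ᵥ Mb.mulVec (fb t)) t := by
  rw [← mulVec_dotProduct_eq_power_balance hM₁ (h1 t) (h2 t) (h3 t)]
  exact (hgrad t).comp_hasDerivAt_dotCLM (hα₁ t)

/-- Discrete power balance (parabolic case): only `f₁ = dα₁/dt` is a time
derivative, and `∇Hᵈ = M₁ e₁`; then `d/dt Hᵈ = -e₂ᵀ M₂ f₂ - e∂ᵀ M∂ f∂`. -/
theorem stmt10 {n₁ n₂ nb : ℕ}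
    (M₁ : Matrix (Fin n₁) (Fin n₁) ℝ) (M₂ : Matrix (Fin n₂) (Fin n₂) ℝ)
    (Mb : Matrix (Fin nb) (Fin nb) ℝ)
    (hM₁ : M₁ᵀ = M₁) (hM₂ : M₂ᵀ = M₂) (hMb : Mbᵀ = Mb)
    (D : Matrix (Fin n₂) (Fin n₁) ℝ) (B : Matrix (Fin n₁) (Fin nb) ℝ)
    (α₁ f₁ e₁ : ℝ → (Fin n₁ → ℝ)) (f₂ e₂ : ℝ → (Fin n₂ → ℝ))
    (fb eb : ℝ → (Fin nb → ℝ))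
    (hα₁ : ∀ t, HasDerivAt α₁ (f₁ t) t)
    (h1 : ∀ t, M₁.mulVec (f₁ t) = -(Dᵀ.mulVec (e₂ t)) + B.mulVec (eb t))
    (h2 : ∀ t, M₂.mulVec (f₂ t) = D.mulVec (e₁ t))
    (h3 : ∀ t, Mb.mulVec (fb t) = -(Bᵀ.mulVec (e₁ t)))
    (Hd : (Fin n₁ → ℝ) → ℝ)
    (hgrad : ∀ t, HasFDerivAt Hd (dotCLM (M₁.mulVec (e₁ t))) (α₁ t))
    (t : ℝ) :
    HasDerivAt (fun s => Hd (α₁ s))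
      (-(e₂ t ⬝ᵥ M₂.mulVec (f₂ t)) - eb t ⬝ᵥ Mb.mulVec (fb t)) t :=
  stmt10_general M₁ M₂ Mb hM₁ D B α₁ f₁ e₁ f₂ e₂ fb eb hα₁ h1 h2 h3 Hd hgrad t
end

section
/- Consider the discretized heat equation system: M_s (dα_s/dt) = D e_S - M_σ e_σ, M_S f_S = -Dᵀ e_s + B u∂, M_σ f_σ = M_σ e_s, M∂ y∂ = Bᵀ e_S (with symmetric mass matrices), together with the discrete entropy-production constitutive relation e_Sᵀ M_S f_S + e_σᵀ M_σ f_σ = 0 and the compatible Dulong-Petit discretization ∇Hᵈ(α_s) = M_s e_s. Then d/dt Hᵈ = u∂ᵀ M∂ y∂. -/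
open Matrix

/-- Discrete first law of thermodynamics for the PFEM-discretized heat equation
with internal energy as Hamiltonian: `d/dt Hᵈ = u∂ᵀ M∂ y∂`. -/
theorem stmt11 {ns nS nb : ℕ}
    (Ms : Matrix (Fin ns) (Fin ns) ℝ) (MS : Matrix (Fin nS) (Fin nS) ℝ)
    (Mσ : Matrix (Fin ns) (Fin ns) ℝ) (Mb : Matrix (Fin nb) (Fin nb) ℝ)
    (hMs : Msᵀ = Ms) (hMS : MSᵀ = MS) (hMσ : Mσᵀ = Mσ) (hMb : Mbᵀ = Mb)
    (D : Matrix (Fin ns) (Fin nS) ℝ) (B : Matrix (Fin nS) (Fin nb) ℝ)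
    (αs αs' es : ℝ → (Fin ns → ℝ)) (fS eS : ℝ → (Fin nS → ℝ))
    (fσ eσ : ℝ → (Fin ns → ℝ)) (ub yb : ℝ → (Fin nb → ℝ))
    (hαs : ∀ t, HasDerivAt αs (αs' t) t)
    -- the discrete Stokes-Dirac structure (eq. (38))
    (h1 : ∀ t, Ms.mulVec (αs' t) = D.mulVec (eS t) - Mσ.mulVec (eσ t))
    (h2 : ∀ t, MS.mulVec (fS t) = -(Dᵀ.mulVec (es t)) + B.mulVec (ub t))
    (h3 : ∀ t, Mσ.mulVec (fσ t) = Mσ.mulVec (es t))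
    (h4 : ∀ t, Mb.mulVec (yb t) = Bᵀ.mulVec (eS t))
    -- discrete entropy-production constitutive relation
    (hconst : ∀ t, eS t ⬝ᵥ MS.mulVec (fS t) + eσ t ⬝ᵥ Mσ.mulVec (fσ t) = 0)
    -- compatible Dulong-Petit discretization: ∇Hᵈ(α_s) = M_s e_s
    (Hd : (Fin ns → ℝ) → ℝ)
    (hgrad : ∀ t, HasFDerivAt Hd (dotCLM (Ms.mulVec (es t))) (αs t))
    (t : ℝ) :
    HasDerivAt (fun s => Hd (αs s)) (ub t ⬝ᵥ Mb.mulVec (yb t)) t := by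
  have hd := (hgrad t).comp_hasDerivAt t (hαs t)
  have key : Ms.mulVec (es t) ⬝ᵥ αs' t = ub t ⬝ᵥ Mb.mulVec (yb t) := by
    have e1 : Ms.mulVec (es t) ⬝ᵥ αs' t = es t ⬝ᵥ Ms.mulVec (αs' t) := by
      rw [dotProduct_mulVec, ← mulVec_transpose, hMs]
    have e2 : es t ⬝ᵥ D.mulVec (eS t) = eS t ⬝ᵥ Dᵀ.mulVec (es t) := by
      rw [dotProduct_mulVec, mulVec_transpose, dotProduct_comm]
    have e3 : es t ⬝ᵥ Mσ.mulVec (eσ t) = eσ t ⬝ᵥ Mσ.mulVec (es t) := by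
      rw [dotProduct_mulVec, ← mulVec_transpose, hMσ, dotProduct_comm]
    have e4 : eS t ⬝ᵥ B.mulVec (ub t) = ub t ⬝ᵥ Bᵀ.mulVec (eS t) := by
      rw [dotProduct_mulVec, mulVec_transpose, dotProduct_comm]
    have hc := hconst t
    rw [h2 t, h3 t] at hc
    rw [e1, h1 t, dotProduct_sub, e2, e3, h4 t, ← e4]
    have : eS t ⬝ᵥ (-(Dᵀ.mulVec (es t)) + B.mulVec (ub t)) =
        -(eS t ⬝ᵥ Dᵀ.mulVec (es t)) + eS t ⬝ᵥ B.mulVec (ub t) := by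
      rw [dotProduct_add, dotProduct_neg]
    rw [this] at hc
    linarith
  rw [← key]
  exact hd
end

section
/- Consider the discretized linear wave system M_ρ (de₁/dt) = -D_gradᵀ e₂ + B u∂, M_T (de₂/dt) = D_grad e₁, M∂ y∂ = Bᵀ e₁, with M_ρ, M_T, M∂ symmetric positive definite. Define Hᵈ(t) = ½ e₁ᵀ M_ρ e₁ + ½ e₂ᵀ M_T e₂. Then dHᵈ/dt = u∂ᵀ M∂ y∂. -/
open Matrix

section Calculus

variable {𝕜 : Type*} [NontriviallyNormedField 𝕜] {ι κ : Type*} [Fintype ι] {t : 𝕜}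

theorem HasDerivAt.dotProduct {u v : 𝕜 → ι → 𝕜} {u' v' : ι → 𝕜}
    (hu : HasDerivAt u u' t) (hv : HasDerivAt v v' t) :
    HasDerivAt (fun s => u s ⬝ᵥ v s) (u' ⬝ᵥ v t + u t ⬝ᵥ v') t := by
  rw [hasDerivAt_pi] at hu hv
  simpa only [_root_.dotProduct, ← Finset.sum_add_distrib, add_comm] using
    HasDerivAt.fun_sum fun i _ => (hu i).fun_mul (hv i)

theorem HasDerivAt.mulVec (M : Matrix κ ι 𝕜) {u : 𝕜 → ι → 𝕜} {u' : ι → 𝕜}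
    (hu : HasDerivAt u u' t) : HasDerivAt (fun s => M *ᵥ u s) (M *ᵥ u') t := by
  rw [hasDerivAt_pi] at hu ⊢
  exact fun k => HasDerivAt.fun_sum fun i _ => (hu i).const_mul (M k i)

theorem HasDerivAt.dotProduct_mulVec_self {M : Matrix ι ι 𝕜} (hM : M.IsSymm)
    {e : 𝕜 → ι → 𝕜} {e' : ι → 𝕜} (he : HasDerivAt e e' t) :
    HasDerivAt (fun s => e s ⬝ᵥ M *ᵥ e s) (2 * (e t ⬝ᵥ M *ᵥ e')) t := by
  have hsymm : e' ⬝ᵥ M *ᵥ e t = e t ⬝ᵥ M *ᵥ e' := by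
    rw [← dotProduct_transpose_mulVec, hM.eq]
  exact (he.dotProduct (he.mulVec M)).congr_deriv (by rw [hsymm, two_mul])

end Calculus

theorem stmt16_general {n₁ n₂ nb : ℕ}
    (Mρ : Matrix (Fin n₁) (Fin n₁) ℝ) (MT : Matrix (Fin n₂) (Fin n₂) ℝ)
    (Mb : Matrix (Fin nb) (Fin nb) ℝ)
    (hMρ : Mρ.PosDef) (hMT : MT.PosDef)
    (Dgrad : Matrix (Fin n₂) (Fin n₁) ℝ) (B : Matrix (Fin n₁) (Fin nb) ℝ)
    (e₁ e₁' : ℝ → (Fin n₁ → ℝ)) (e₂ e₂' : ℝ → (Fin n₂ → ℝ))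
    (ub yb : ℝ → (Fin nb → ℝ))
    (he₁ : ∀ t, HasDerivAt e₁ (e₁' t) t) (he₂ : ∀ t, HasDerivAt e₂ (e₂' t) t)
    (h1 : ∀ t, Mρ.mulVec (e₁' t) = -(Dgradᵀ.mulVec (e₂ t)) + B.mulVec (ub t))
    (h2 : ∀ t, MT.mulVec (e₂' t) = Dgrad.mulVec (e₁ t))
    (h3 : ∀ t, Mb.mulVec (yb t) = Bᵀ.mulVec (e₁ t))
    (t : ℝ) :
    HasDerivAt
      (fun s => (1 / 2) * (e₁ s ⬝ᵥ Mρ.mulVec (e₁ s)) + (1 / 2) * (e₂ s ⬝ᵥ MT.mulVec (e₂ s)))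
      (ub t ⬝ᵥ Mb.mulVec (yb t)) t := by
  have hρ := (he₁ t).dotProduct_mulVec_self (isHermitian_iff_isSymm.mp hMρ.isHermitian)
  have hT := (he₂ t).dotProduct_mulVec_self (isHermitian_iff_isSymm.mp hMT.isHermitian)
  refine ((hρ.const_mul (1 / 2)).add (hT.const_mul (1 / 2))).congr_deriv ?_
  -- the `Dgrad` terms cancel: the interconnection `[[0, -Dgradᵀ], [Dgrad, 0]]` is skew-symmetric
  rw [h1, h2, h3, dotProduct_add, dotProduct_neg, dotProduct_transpose_mulVec,
    dotProduct_transpose_mulVec]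
  ring

/-- Discrete power balance for the PFEM-discretized wave equation in co-energy
form: `Hᵈ = ½e₁ᵀMρe₁ + ½e₂ᵀMTe₂` satisfies `dHᵈ/dt = u∂ᵀ M∂ y∂`. -/
theorem stmt16 {n₁ n₂ nb : ℕ}
    (Mρ : Matrix (Fin n₁) (Fin n₁) ℝ) (MT : Matrix (Fin n₂) (Fin n₂) ℝ)
    (Mb : Matrix (Fin nb) (Fin nb) ℝ)
    (hMρ : Mρ.PosDef) (hMT : MT.PosDef) (hMb : Mb.PosDef)
    (Dgrad : Matrix (Fin n₂) (Fin n₁) ℝ) (B : Matrix (Fin n₁) (Fin nb) ℝ)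
    (e₁ e₁' : ℝ → (Fin n₁ → ℝ)) (e₂ e₂' : ℝ → (Fin n₂ → ℝ))
    (ub yb : ℝ → (Fin nb → ℝ))
    (he₁ : ∀ t, HasDerivAt e₁ (e₁' t) t) (he₂ : ∀ t, HasDerivAt e₂ (e₂' t) t)
    (h1 : ∀ t, Mρ.mulVec (e₁' t) = -(Dgradᵀ.mulVec (e₂ t)) + B.mulVec (ub t))
    (h2 : ∀ t, MT.mulVec (e₂' t) = Dgrad.mulVec (e₁ t))
    (h3 : ∀ t, Mb.mulVec (yb t) = Bᵀ.mulVec (e₁ t))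
    (t : ℝ) :
    HasDerivAt
      (fun s => (1 / 2) * (e₁ s ⬝ᵥ Mρ.mulVec (e₁ s)) + (1 / 2) * (e₂ s ⬝ᵥ MT.mulVec (e₂ s)))
      (ub t ⬝ᵥ Mb.mulVec (yb t)) t :=
  stmt16_general Mρ MT Mb hMρ hMT Dgrad B e₁ e₁' e₂ e₂' ub yb he₁ he₂ h1 h2 h3 t
end
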